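/- Under the standing assumptions, suppose additionally that φ is finite on all of ℝ^d and M-smooth with respect to a norm ‖·‖. Let x_k with x_k* = ∇φ(x_k), let i_k be an index with f_{i_k}(x_k) ≠ 0 and ∇f_{i_k}(x_k) ≠ 0, and set β_k = ⟨∇f_{i_k}(x_k), x_k⟩ − f_{i_k}(x_k). Then the function g(t) = φ*(x_k* − t∇f_{i_k}(x_k)) + tβ_k is (‖∇f_{i_k}(x_k)‖_*²/M)-strongly convex, and its minimizer t_{k,φ} satisfies |t_{k,φ}| ≤ M |f_{i_k}(x_k)| / ‖∇f_{i_k}(x_k)‖_*². -/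

import Mathlib

open Set Filter Topology MeasureTheory ProbabilityTheory

noncomputable section

abbrev Euc (d : ℕ) := EuclideanSpace ℝ (Fin d)

/-- Real inner product on `ℝ^d`. -/
def rinn {d : ℕ} (x y : Euc d) : ℝ := inner ℝ x y

/-- Effective domain of an extended-real-valued function. -/
def edom {d : ℕ} (φ : Euc d → EReal) : Set (Euc d) := {x | φ x ≠ ⊤}

/-- Convex subdifferential. -/
def subdiff {d : ℕ} (φ : Euc d → EReal) (x : Euc d) : Set (Euc d) :=
  {u | φ x ≠ ⊤ ∧ ∀ y : Euc d, φ x + ((rinn u (y - x) : ℝ) : EReal) ≤ φ y}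

/-- Domain of the subdifferential. -/
def ddom {d : ℕ} (φ : Euc d → EReal) : Set (Euc d) := {x | (subdiff φ x).Nonempty}

/-- Bregman distance `D_φ^{u}(x,y) = φ(y) - φ(x) - ⟨u, y - x⟩`. -/
def breg {d : ℕ} (φ : Euc d → EReal) (u x y : Euc d) : EReal :=
  φ y - φ x - ((rinn u (y - x) : ℝ) : EReal)

/-- Fenchel conjugate (extended-real-valued). -/
def econj {d : ℕ} (φ : Euc d → EReal) (u : Euc d) : EReal :=
  ⨆ x : Euc d, ((rinn u x : ℝ) : EReal) - φ x

/-- Real-valued Fenchel conjugate (under the standing assumptions `econj` is finite). -/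
def rconj {d : ℕ} (φ : Euc d → EReal) (u : Euc d) : ℝ := (econj φ u).toReal

/-- Gradient `∇φ*` of the conjugate. -/
def gradconj {d : ℕ} (φ : Euc d → EReal) (u : Euc d) : Euc d := gradient (rconj φ) u

def ConvexE {d : ℕ} (φ : Euc d → EReal) : Prop :=
  ∀ x y : Euc d, ∀ t : ℝ, 0 < t → t < 1 →
    φ (t • x + (1 - t) • y) ≤ (t : EReal) * φ x + ((1 - t : ℝ) : EReal) * φ y

def StrictConvexOnE {d : ℕ} (φ : Euc d → EReal) (s : Set (Euc d)) : Prop :=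
  ∀ x ∈ s, ∀ y ∈ s, x ≠ y → ∀ t : ℝ, 0 < t → t < 1 →
    φ (t • x + (1 - t) • y) < (t : EReal) * φ x + ((1 - t : ℝ) : EReal) * φ y

def ProperE {d : ℕ} (φ : Euc d → EReal) : Prop :=
  (∃ x, φ x ≠ ⊤) ∧ ∀ x, φ x ≠ ⊥

/-- `φ(x)/‖x‖ → ∞` as `‖x‖ → ∞`. -/
def Supercoercive {d : ℕ} (φ : Euc d → EReal) : Prop :=
  ∀ M : ℝ, ∃ R : ℝ, ∀ x : Euc d, R ≤ ‖x‖ → ((M * ‖x‖ : ℝ) : EReal) ≤ φ x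

/-- Essential strict convexity: strict convexity on the relative interior of the domain. -/
def EssStrictConvexE {d : ℕ} (φ : Euc d → EReal) : Prop :=
  StrictConvexOnE φ (intrinsicInterior ℝ (edom φ))

/-- Standing assumptions on the distance generating function `φ` and constraint set `C`. -/
structure PhiAssump {d : ℕ} (φ : Euc d → EReal) (C : Set (Euc d)) : Prop where
  Cne : C.Nonempty
  Cconv : Convex ℝ C
  Ccl : IsClosed C
  proper : ProperE φ
  conv : ConvexE φ
  lsc : LowerSemicontinuous φ
  coercive : Supercoercive φ
  essstrict : EssStrictConvexE φ
  domC : closure (ddom φ) = C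
  ri_eq : ddom φ = intrinsicInterior ℝ (edom φ)

/-- Standing assumption (iv): Bregman distances tend to zero along convergent sequences. -/
def BregCont {d : ℕ} (φ : Euc d → EReal) : Prop :=
  ∀ x ∈ edom φ, ∀ xk : ℕ → Euc d, ∀ uk : ℕ → Euc d,
    (∀ k, uk k ∈ subdiff φ (xk k)) → Tendsto xk atTop (𝓝 x) →
    Tendsto (fun k => breg φ (uk k) (xk k) x) atTop (𝓝 (0 : EReal))

/-- `f` is continuously differentiable on `Dset ⊇ C`, with gradients `f'`. -/
structure FAssump {d n : ℕ} (f : Fin n → Euc d → ℝ) (f' : Fin n → Euc d → Euc d)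
    (Dset C : Set (Euc d)) : Prop where
  CsubD : C ⊆ Dset
  grad : ∀ i, ∀ x ∈ Dset, HasGradientAt (f i) (f' i x) x
  cont : ∀ i, ContinuousOn (f' i) Dset

/-- Solution set `S = C ∩ f⁻¹(0)`. -/
def solSet {d n : ℕ} (f : Fin n → Euc d → ℝ) (C : Set (Euc d)) : Set (Euc d) :=
  {x ∈ C | ∀ i, f i x = 0}

/-- `N` is a norm on `ℝ^d`. -/
def IsANorm {d : ℕ} (N : Euc d → ℝ) : Prop :=
  (∀ x, N x = 0 ↔ x = 0) ∧ (∀ (c : ℝ) (x : Euc d), N (c • x) = |c| * N x) ∧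
    ∀ x y : Euc d, N (x + y) ≤ N x + N y

/-- Dual norm of `N`. -/
def dualN {d : ℕ} (N : Euc d → ℝ) (u : Euc d) : ℝ :=
  sSup {r : ℝ | ∃ y : Euc d, N y ≤ 1 ∧ r = (rinn u y)}

/-- `φ` is `σ`-strongly convex w.r.t. the norm `N`. -/
def StronglyConvexWrt {d : ℕ} (φ : Euc d → EReal) (σ : ℝ) (N : Euc d → ℝ) : Prop :=
  ∀ x ∈ ddom φ, ∀ y ∈ ddom φ, ∀ u ∈ subdiff φ x,
    ((σ / 2 * (N (x - y)) ^ 2 : ℝ) : EReal) ≤ breg φ u x y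

/-- `φ` is `M`-smooth w.r.t. the norm `N`: finite everywhere (subdifferentiable everywhere)
with the quadratic upper bound. -/
def SmoothWrt {d : ℕ} (φ : Euc d → EReal) (M : ℝ) (N : Euc d → ℝ) : Prop :=
  (∀ x : Euc d, (subdiff φ x).Nonempty) ∧
    ∀ x y : Euc d, ∀ u ∈ subdiff φ x,
      breg φ u x y ≤ ((M / 2 * (N (x - y)) ^ 2 : ℝ) : EReal)

/-- `g` (with gradient `g'`) is star-convex. -/
def StarConvexWith {d : ℕ} (g : Euc d → ℝ) (g' : Euc d → Euc d) : Prop :=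
  (∃ z : Euc d, ∀ y, g z ≤ g y) ∧
    ∀ x z : Euc d, (∀ y, g z ≤ g y) → g x + rinn (g' x) (z - x) ≤ g z

/-- `g` (with gradient `g'`) is strictly star-convex. -/
def StrictStarConvexWith {d : ℕ} (g : Euc d → ℝ) (g' : Euc d → Euc d) : Prop :=
  (∃ z : Euc d, ∀ y, g z ≤ g y) ∧
    ∀ x z : Euc d, (∀ y, g z ≤ g y) → x ≠ z → g x + rinn (g' x) (z - x) < g z

/-- `g` is `μ`-strongly star-convex relative to `φ`. -/
def StronglyStarConvexRel {d : ℕ} (g : Euc d → ℝ) (g' : Euc d → Euc d) (μ : ℝ)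
    (φ : Euc d → EReal) : Prop :=
  (∃ z : Euc d, ∀ y, g z ≤ g y) ∧
    ∀ x : Euc d, ∀ u ∈ subdiff φ x, ∀ z : Euc d, (∀ y, g z ≤ g y) →
      ((g x + rinn (g' x) (z - x) : ℝ) : EReal) + (μ : EReal) * breg φ u x z ≤ (g z : EReal)

def IsAffineF {d : ℕ} (g : Euc d → ℝ) : Prop :=
  ∃ (a : Euc d) (b : ℝ), ∀ x, g x = (rinn a x) + b

/-- Assumption 2: each component is either nonnegative star-convex with a zero in `dom ∂φ`,
nonnegative strictly star-convex, or affine. -/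
def Assump2 {d n : ℕ} (φ : Euc d → EReal) (f : Fin n → Euc d → ℝ)
    (f' : Fin n → Euc d → Euc d) : Prop :=
  ∀ i : Fin n,
    ((∀ x, 0 ≤ f i x) ∧ StarConvexWith (f i) (f' i) ∧ ∃ z ∈ ddom φ, f i z = 0) ∨
    ((∀ x, 0 ≤ f i x) ∧ StrictStarConvexWith (f i) (f' i)) ∨
    IsAffineF (f i)

/-- `g` is `L`-smooth w.r.t. the norm `N` (quadratic upper bound). -/
def LSmoothWrt {d : ℕ} (g : Euc d → ℝ) (g' : Euc d → Euc d) (L : ℝ) (N : Euc d → ℝ) : Prop :=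
  ∀ x y : Euc d, g y ≤ g x + rinn (g' x) (y - x) + L / 2 * (N (x - y)) ^ 2

/-- Hyperplane given by the linearization of `f i` at `x`. -/
def linHyp {d n : ℕ} (f : Fin n → Euc d → ℝ) (f' : Fin n → Euc d → Euc d)
    (i : Fin n) (x : Euc d) : Set (Euc d) :=
  {y | f i x + rinn (f' i x) (y - x) = 0}

/-- Objective of the one-dimensional dual problem defining the exact NBK step size. -/
def lineObj {d n : ℕ} (φ : Euc d → EReal) (f : Fin n → Euc d → ℝ)
    (f' : Fin n → Euc d → Euc d) (i : Fin n) (x u : Euc d) (t : ℝ) : ℝ :=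
  rconj φ (u - t • f' i x) + t * (rinn (f' i x) x - f i x)

/-- Local tangential cone condition with constant `η` on `U`. -/
def TCCOn {d : ℕ} (g : Euc d → ℝ) (g' : Euc d → Euc d) (η : ℝ) (U : Set (Euc d)) : Prop :=
  ∀ x ∈ U, ∀ y ∈ U, |g x + rinn (g' x) (y - x) - g y| ≤ η * |g x - g y|

/-- The set `B_{r,φ}(z)`. -/
def BregBall {d : ℕ} (φ : Euc d → EReal) (C : Set (Euc d)) (r : ℝ) (z : Euc d) :
    Set (Euc d) :=
  {x ∈ C | ∀ u ∈ subdiff φ x, breg φ u x z ≤ (r : EReal)}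

end

/-!
Because `φ` is finite, lower semicontinuous and supercoercive, the supremum defining `φ*(v)` is
attained at some `x` with `v ∈ ∂φ(x)`. Testing the supremum defining `φ*(v + s a)` at `x + z`,
with `z` a suitable multiple of a vector `y` in the `N`-unit ball, and bounding `φ(x + z)` by
`M`-smoothness gives `φ*(v + s a) ≥ φ*(v) + s ⟨a, x⟩ + s² ⟨a, y⟩² / (2M)`; taking the supremum
over `y` turns `⟨a, y⟩²` into `‖a‖_*²`. Applying this at the point `v = u - τ a` of the segment
between two parameters, the linear terms cancel and what is left is strong convexity of the line
objective `g` with modulus `‖a‖_*² / M`. Strong convexity turns both the minimality of `t` and the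
affine minorant `g(0) - f_i(x) t ≤ g(t)` (Fenchel–Young at `x`) into quadratic bounds; adding them
gives `‖a‖_*² t² / M ≤ f_i(x) t`.
-/

namespace IsANorm

variable {d : ℕ} {N : Euc d → ℝ}

lemma map_zero (hN : IsANorm N) : N 0 = 0 := (hN.1 0).2 rfl

lemma map_neg (hN : IsANorm N) (x : Euc d) : N (-x) = N x := by
  simpa using hN.2.1 (-1) x

lemma nonneg (hN : IsANorm N) (x : Euc d) : 0 ≤ N x := by
  have h := hN.2.2 x (-x)
  rw [add_neg_cancel, hN.map_zero, hN.map_neg] at h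
  linarith

lemma pos (hN : IsANorm N) {x : Euc d} (hx : x ≠ 0) : 0 < N x :=
  (hN.nonneg x).lt_of_ne fun h => hx ((hN.1 x).1 h.symm)

lemma convexOn (hN : IsANorm N) : ConvexOn ℝ univ N := by
  refine ⟨convex_univ, fun x _ y _ a b ha hb _ => ?_⟩
  calc N (a • x + b • y) ≤ N (a • x) + N (b • y) := hN.2.2 _ _
    _ = a • N x + b • N y := by rw [hN.2.1, hN.2.1, abs_of_nonneg ha, abs_of_nonneg hb]; rfl

lemma exists_pos_mul_norm_le (hN : IsANorm N) : ∃ m > 0, ∀ x, m * ‖x‖ ≤ N x := by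
  cases subsingleton_or_nontrivial (Euc d) with
  | inl _ => exact ⟨1, one_pos, fun x => by simp [Subsingleton.elim x 0, hN.map_zero]⟩
  | inr _ =>
    obtain ⟨y₀, hy₀, hmin⟩ := (isCompact_sphere (0 : Euc d) 1).exists_isMinOn
      (NormedSpace.sphere_nonempty.2 zero_le_one)
      hN.convexOn.locallyLipschitz.continuous.continuousOn
    refine ⟨N y₀, hN.pos (ne_zero_of_mem_unit_sphere ⟨y₀, hy₀⟩), fun x => ?_⟩
    rcases eq_or_ne x 0 with rfl | hx
    · simp [hN.map_zero]
    have hxpos : 0 < ‖x‖ := norm_pos_iff.2 hx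
    have h : N y₀ ≤ N (‖x‖⁻¹ • x) := hmin (by simp [norm_smul, hxpos.ne'])
    rw [hN.2.1, abs_of_pos (inv_pos.2 hxpos), inv_mul_eq_div, le_div_iff₀ hxpos] at h
    exact h

end IsANorm

section dualNorm

variable {d : ℕ} {N : Euc d → ℝ}

lemma zero_mem_dualN_set (hN : IsANorm N) (a : Euc d) :
    (0 : ℝ) ∈ {r : ℝ | ∃ y : Euc d, N y ≤ 1 ∧ r = rinn a y} :=
  ⟨0, by simp [hN.map_zero], by simp [rinn]⟩

lemma bddAbove_dualN_set (hN : IsANorm N) (a : Euc d) :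
    BddAbove {r : ℝ | ∃ y : Euc d, N y ≤ 1 ∧ r = rinn a y} := by
  obtain ⟨m, hm, hle⟩ := hN.exists_pos_mul_norm_le
  refine ⟨‖a‖ / m, ?_⟩
  rintro _ ⟨y, hy, rfl⟩
  have hy' : ‖y‖ ≤ 1 / m := by rw [le_div_iff₀ hm, mul_comm]; exact (hle y).trans hy
  calc rinn a y ≤ ‖a‖ * ‖y‖ := real_inner_le_norm a y
    _ ≤ ‖a‖ * (1 / m) := by gcongr
    _ = ‖a‖ / m := by ring

lemma dualN_pos (hN : IsANorm N) {a : Euc d} (ha : a ≠ 0) : 0 < dualN N a := by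
  have hmem : ‖a‖ ^ 2 / N a ∈ {r : ℝ | ∃ y : Euc d, N y ≤ 1 ∧ r = rinn a y} := by
    refine ⟨(N a)⁻¹ • a, ?_, ?_⟩
    · rw [hN.2.1, abs_of_pos (inv_pos.2 (hN.pos ha)), inv_mul_cancel₀ (hN.pos ha).ne']
    · simp only [rinn, real_inner_smul_right, real_inner_self_eq_norm_sq]; ring
  have : 0 < ‖a‖ ^ 2 / N a := div_pos (by positivity) (hN.pos ha)
  exact this.trans_le (le_csSup (bddAbove_dualN_set hN a) hmem)

lemma mul_sq_dualN_le (hN : IsANorm N) {a : Euc d} {k B : ℝ} (hk : 0 ≤ k)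
    (h : ∀ y, N y ≤ 1 → k * rinn a y ^ 2 ≤ B) : k * dualN N a ^ 2 ≤ B := by
  have hB : 0 ≤ B := by simpa [rinn] using h 0 (by simp [hN.map_zero])
  rcases hk.eq_or_lt with rfl | hk
  · simpa using hB
  have hD : 0 ≤ dualN N a := Real.sSup_nonneg' ⟨0, zero_mem_dualN_set hN a, le_rfl⟩
  suffices dualN N a ≤ √(B / k) by
    rw [Real.le_sqrt hD (by positivity), le_div_iff₀ hk, mul_comm] at this
    exact this
  refine csSup_le ⟨0, zero_mem_dualN_set hN a⟩ ?_
  rintro _ ⟨y, hy, rfl⟩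
  refine (le_abs_self _).trans (Real.abs_le_sqrt ?_)
  rw [le_div_iff₀ hk, mul_comm]
  exact h y hy

end dualNorm

section RealValued

variable {d : ℕ} {ψ : Euc d → ℝ}

lemma mem_subdiff_coe_iff {x v : Euc d} :
    v ∈ subdiff (fun z => (ψ z : EReal)) x ↔ ∀ y, rinn v y - ψ y ≤ rinn v x - ψ x := by
  simp only [subdiff, mem_ofPred_eq, ne_eq, EReal.coe_ne_top, not_false_eq_true, true_and,
    ← EReal.coe_add, EReal.coe_le_coe_iff, rinn, inner_sub_right]
  exact forall_congr' fun y => by constructor <;> intro h <;> linarith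

lemma rconj_coe_eq_of_mem_subdiff {x v : Euc d} (hv : v ∈ subdiff (fun z => (ψ z : EReal)) x) :
    rconj (fun z => (ψ z : EReal)) v = rinn v x - ψ x := by
  have hmax := mem_subdiff_coe_iff.1 hv
  have : econj (fun z => (ψ z : EReal)) v = ((rinn v x - ψ x : ℝ) : EReal) := by
    refine le_antisymm (iSup_le fun y => ?_) ?_
    · exact EReal.coe_le_coe_iff.2 (hmax y)
    · exact_mod_cast le_iSup (fun y => ((rinn v y : ℝ) : EReal) - (ψ y : EReal)) x
  rw [rconj, this, EReal.toReal_coe]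

lemma inner_sub_le_rconj_coe {x v : Euc d} (hv : v ∈ subdiff (fun z => (ψ z : EReal)) x)
    (y : Euc d) : rinn v y - ψ y ≤ rconj (fun z => (ψ z : EReal)) v := by
  rw [rconj_coe_eq_of_mem_subdiff hv]
  exact mem_subdiff_coe_iff.1 hv y

lemma le_of_smoothWrt_coe {M : ℝ} {N : Euc d → ℝ} (hsm : SmoothWrt (fun z => (ψ z : EReal)) M N)
    {x v : Euc d} (hv : v ∈ subdiff (fun z => (ψ z : EReal)) x) (y : Euc d) :
    ψ y ≤ ψ x + rinn v (y - x) + M / 2 * N (x - y) ^ 2 := by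
  have h := hsm.2 x y v hv
  simp only [breg, ← EReal.coe_sub, EReal.coe_le_coe_iff] at h
  linarith

lemma exists_mem_subdiff_coe (hlsc : LowerSemicontinuous (fun z => (ψ z : EReal)))
    (hcoer : Supercoercive (fun z => (ψ z : EReal))) (v : Euc d) :
    ∃ x, v ∈ subdiff (fun z => (ψ z : EReal)) x := by
  set g : Euc d → ℝ := fun y => ψ y - rinn v y
  have hψ : LowerSemicontinuous ψ := fun x r hr =>
    (hlsc x r (EReal.coe_lt_coe_iff.2 hr)).mono fun _ => EReal.coe_lt_coe_iff.1
  have hg : LowerSemicontinuous g :=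
    hψ.add (continuous_const.inner continuous_id).neg.lowerSemicontinuous
  obtain ⟨R, hR⟩ := hcoer (‖v‖ + 1)
  have hgrowth : ∀ y, R ≤ ‖y‖ → ‖y‖ ≤ g y := fun y hy => by
    have h1 : (‖v‖ + 1) * ‖y‖ ≤ ψ y := by exact EReal.coe_le_coe_iff.1 (hR y hy)
    have h2 : rinn v y ≤ ‖v‖ * ‖y‖ := real_inner_le_norm v y
    simp only [g]
    linarith
  set ρ := max R |g 0|
  have h0 : (0 : Euc d) ∈ Metric.closedBall 0 ρ := by simp [ρ]
  obtain ⟨x, -, hx⟩ := (hg.lowerSemicontinuousOn _).exists_isMinOn ⟨0, h0⟩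
    (isCompact_closedBall (0 : Euc d) ρ)
  refine ⟨x, mem_subdiff_coe_iff.2 fun y => ?_⟩
  suffices g x ≤ g y by simp only [g] at this; linarith
  by_cases hy : ‖y‖ ≤ ρ
  · exact hx (by simpa using hy)
  · have hρ := lt_of_not_ge hy
    calc g x ≤ g 0 := hx h0
      _ ≤ ρ := (le_abs_self _).trans (le_max_right _ _)
      _ ≤ g y := hρ.le.trans (hgrowth y ((le_max_left _ _).trans hρ.le))

end RealValued

section StrongConvexity

variable {E : Type*} [NormedAddCommGroup E] [NormedSpace ℝ E] {h : E → ℝ} {m : ℝ}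

lemma StrongConvexOn.add_sq_le_of_minorant (hh : StrongConvexOn univ m h) {x₀ : E}
    (ℓ : E →ₗ[ℝ] ℝ) (hℓ : ∀ y, h x₀ + ℓ (y - x₀) ≤ h y) (y : E) :
    h x₀ + ℓ (y - x₀) + m / 2 * ‖y - x₀‖ ^ 2 ≤ h y := by
  have hθ : ∀ θ ∈ Ioo (0 : ℝ) 1, (1 - θ) * m / 2 * ‖y - x₀‖ ^ 2 ≤ h y - h x₀ - ℓ (y - x₀) := by
    rintro θ ⟨hθ0, hθ1⟩
    have hconv := hh.2 (mem_univ y) (mem_univ x₀) hθ0.le (sub_nonneg.2 hθ1.le) (add_sub_cancel θ 1)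
    have hsub := hℓ (θ • y + (1 - θ) • x₀)
    rw [show θ • y + (1 - θ) • x₀ - x₀ = θ • (y - x₀) by module, map_smul, smul_eq_mul] at hsub
    simp only [smul_eq_mul] at hconv
    have : θ * ((1 - θ) * m / 2 * ‖y - x₀‖ ^ 2) ≤ θ * (h y - h x₀ - ℓ (y - x₀)) := by
      nlinarith
    exact le_of_mul_le_mul_left this hθ0
  have hlim : Tendsto (fun θ : ℝ => (1 - θ) * m / 2 * ‖y - x₀‖ ^ 2) (𝓝[>] 0)
      (𝓝 (m / 2 * ‖y - x₀‖ ^ 2)) := by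
    have : Continuous fun θ : ℝ => (1 - θ) * m / 2 * ‖y - x₀‖ ^ 2 := by fun_prop
    simpa using (this.tendsto 0).mono_left nhdsWithin_le_nhds
  have := le_of_tendsto hlim (eventually_of_mem (Ioo_mem_nhdsGT one_pos) hθ)
  linarith

lemma StrongConvexOn.abs_sub_le_of_isMinOn {h : ℝ → ℝ} (hh : StrongConvexOn univ m h) (hm : 0 < m)
    {x₀ c t : ℝ} (hc : ∀ y, h x₀ + c * (y - x₀) ≤ h y) (ht : ∀ s, h t ≤ h s) :
    |t - x₀| ≤ |c| / m := by
  have hmin := hh.add_sq_le_of_minorant 0 (by simpa using ht) x₀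
  have hsub := hh.add_sq_le_of_minorant (LinearMap.mulLeft ℝ c) (by simpa using hc) t
  simp only [LinearMap.zero_apply, LinearMap.mulLeft_apply, Real.norm_eq_abs, sq_abs] at hmin hsub
  have hquad : m * |t - x₀| * |t - x₀| ≤ |c| * |t - x₀| := by
    rw [mul_assoc, ← sq, sq_abs, ← abs_mul]
    linarith [neg_abs_le (c * (t - x₀))]
  rw [le_div_iff₀ hm, mul_comm]
  rcases (abs_nonneg (t - x₀)).eq_or_lt with h0 | hpos
  · rw [← h0, mul_zero]; exact abs_nonneg c
  · exact le_of_mul_le_mul_right hquad hpos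

end StrongConvexity

section LineObjective

variable {d : ℕ} {ψ : Euc d → ℝ} {M : ℝ} {N : Euc d → ℝ}

lemma le_rconj_coe_add_smul (hM : 0 < M) (hN : IsANorm N)
    (hsm : SmoothWrt (fun z => (ψ z : EReal)) M N)
    (hsurj : ∀ w, ∃ x, w ∈ subdiff (fun z => (ψ z : EReal)) x)
    {x v : Euc d} (hv : v ∈ subdiff (fun z => (ψ z : EReal)) x) (a : Euc d) (s : ℝ) :
    rconj (fun z => (ψ z : EReal)) v + s * rinn a x + s ^ 2 / (2 * M) * dualN N a ^ 2 ≤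
      rconj (fun z => (ψ z : EReal)) (v + s • a) := by
  obtain ⟨x', hx'⟩ := hsurj (v + s • a)
  refine le_sub_iff_add_le'.1 (mul_sq_dualN_le hN (by positivity) fun y hy => ?_)
  -- for `N y = 1`, `z` maximises `s * rinn a z - M / 2 * N z ^ 2` over the multiples of `y`
  set z := (s * rinn a y / M) • y
  have hFY := inner_sub_le_rconj_coe hx' (x + z)
  have hsmooth := le_of_smoothWrt_coe hsm hv (x + z)
  have hNz : N (x - (x + z)) ^ 2 ≤ (s * rinn a y / M) ^ 2 := by
    rw [show x - (x + z) = (-(s * rinn a y / M)) • y by simp [z], hN.2.1, mul_pow, sq_abs, neg_sq]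
    exact mul_le_of_le_one_right (sq_nonneg _) (pow_le_one₀ (hN.nonneg y) hy)
  have hinner : rinn (v + s • a) (x + z) =
      rinn v x + rinn v z + s * rinn a x + s ^ 2 * rinn a y ^ 2 / M := by
    simp only [z, rinn, inner_add_left, inner_add_right, real_inner_smul_left,
      real_inner_smul_right]
    field_simp
    ring
  rw [show x + z - x = z by abel] at hsmooth
  rw [rconj_coe_eq_of_mem_subdiff hv]
  have hquad : M / 2 * N (x - (x + z)) ^ 2 ≤ s ^ 2 / (2 * M) * rinn a y ^ 2 := by
    calc M / 2 * N (x - (x + z)) ^ 2 ≤ M / 2 * (s * rinn a y / M) ^ 2 := by gcongr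
      _ = s ^ 2 / (2 * M) * rinn a y ^ 2 := by field_simp
  have hlin : s ^ 2 * rinn a y ^ 2 / M = 2 * (s ^ 2 / (2 * M) * rinn a y ^ 2) := by
    field_simp
  linarith

lemma strongConvexOn_lineObj (hM : 0 < M) (hN : IsANorm N)
    (hsm : SmoothWrt (fun z => (ψ z : EReal)) M N)
    (hsurj : ∀ w, ∃ x, w ∈ subdiff (fun z => (ψ z : EReal)) x)
    {n : ℕ} (f : Fin n → Euc d → ℝ) (f' : Fin n → Euc d → Euc d) (i : Fin n) (x u : Euc d) :
    StrongConvexOn univ (dualN N (f' i x) ^ 2 / M)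
      (lineObj (fun z => (ψ z : EReal)) f f' i x u) := by
  refine ⟨convex_univ, fun s _ t _ θ θ' hθ hθ' hsum => ?_⟩
  obtain rfl : θ' = 1 - θ := by linarith
  set τ := θ * s + (1 - θ) * t
  obtain ⟨xτ, hxτ⟩ := hsurj (u - τ • f' i x)
  have hs := le_rconj_coe_add_smul hM hN hsm hsurj hxτ (f' i x) (τ - s)
  have ht := le_rconj_coe_add_smul hM hN hsm hsurj hxτ (f' i x) (τ - t)
  rw [show u - τ • f' i x + (τ - s) • f' i x = u - s • f' i x by module] at hs
  rw [show u - τ • f' i x + (τ - t) • f' i x = u - t • f' i x by module] at ht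
  simp only [lineObj, smul_eq_mul, Real.norm_eq_abs, sq_abs]
  linear_combination θ * hs + (1 - θ) * ht

lemma lineObj_zero_sub_mul_le (hsurj : ∀ w, ∃ x, w ∈ subdiff (fun z => (ψ z : EReal)) x)
    {n : ℕ} (f : Fin n → Euc d → ℝ) (f' : Fin n → Euc d → Euc d) (i : Fin n) {x u : Euc d}
    (hu : u ∈ subdiff (fun z => (ψ z : EReal)) x) (t : ℝ) :
    lineObj (fun z => (ψ z : EReal)) f f' i x u 0 - f i x * t ≤
      lineObj (fun z => (ψ z : EReal)) f f' i x u t := by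
  obtain ⟨x', hx'⟩ := hsurj (u - t • f' i x)
  have hFY := inner_sub_le_rconj_coe hx' x
  simp only [rinn, inner_sub_left, real_inner_smul_left] at hFY
  simp only [lineObj, zero_smul, sub_zero, zero_mul, add_zero, rconj_coe_eq_of_mem_subdiff hu, rinn]
  linarith

end LineObjective

theorem statement8_general {d n : ℕ} (φ : Euc d → EReal) (C : Set (Euc d))
    (f : Fin n → Euc d → ℝ) (f' : Fin n → Euc d → Euc d)
    (hφ : PhiAssump φ C)
    (hfin : ∀ x : Euc d, φ x ≠ ⊤)
    (M : ℝ) (hM : 0 < M) (N : Euc d → ℝ) (hN : IsANorm N) (hsm : SmoothWrt φ M N)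
    (x u : Euc d) (hu : subdiff φ x = {u})
    (i : Fin n) (hf'0 : f' i x ≠ 0) :
    (∀ s t θ : ℝ, 0 < θ → θ < 1 →
      lineObj φ f f' i x u (θ * s + (1 - θ) * t) ≤
        θ * lineObj φ f f' i x u s + (1 - θ) * lineObj φ f f' i x u t -
          (dualN N (f' i x)) ^ 2 / M / 2 * (θ * (1 - θ) * (s - t) ^ 2)) ∧
    ∀ t : ℝ, (∀ s : ℝ, lineObj φ f f' i x u t ≤ lineObj φ f f' i x u s) →
      |t| ≤ M * |f i x| / (dualN N (f' i x)) ^ 2 := by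
  obtain ⟨ψ, rfl⟩ : ∃ ψ : Euc d → ℝ, φ = fun z => (ψ z : EReal) :=
    ⟨_, funext fun z => (EReal.coe_toReal (hfin z) (hφ.proper.2 z)).symm⟩
  have hsurj := exists_mem_subdiff_coe hφ.lsc hφ.coercive
  have hconv := strongConvexOn_lineObj hM hN hsm hsurj f f' i x u
  refine ⟨fun s t θ hθ hθ' => ?_, fun t ht => ?_⟩
  · have := hconv.2 (mem_univ s) (mem_univ t) hθ.le (sub_nonneg.2 hθ'.le) (add_sub_cancel θ 1)
    simp only [smul_eq_mul, Real.norm_eq_abs, sq_abs] at this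
    linarith
  · have hD : 0 < dualN N (f' i x) ^ 2 / M := div_pos (pow_pos (dualN_pos hN hf'0) 2) hM
    have hminor (s : ℝ) := lineObj_zero_sub_mul_le hsurj f f' i (hu ▸ mem_singleton u) s
    have := hconv.abs_sub_le_of_isMinOn hD (x₀ := 0) (c := -f i x)
      (fun s => by simpa using hminor s) ht
    rwa [sub_zero, abs_neg, div_div_eq_mul_div, mul_comm] at this

/-- Lemma (ii): strong convexity of the line-search objective and upper bound on
the exact step size under smoothness of `φ`. -/
theorem statement8 {d n : ℕ} (φ : Euc d → EReal) (C Dset : Set (Euc d))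
    (f : Fin n → Euc d → ℝ) (f' : Fin n → Euc d → Euc d)
    (hφ : PhiAssump φ C) (hf : FAssump f f' Dset C)
    (hfin : ∀ x : Euc d, φ x ≠ ⊤)
    (M : ℝ) (hM : 0 < M) (N : Euc d → ℝ) (hN : IsANorm N) (hsm : SmoothWrt φ M N)
    (x u : Euc d) (hu : subdiff φ x = {u})
    (i : Fin n) (hf0 : f i x ≠ 0) (hf'0 : f' i x ≠ 0) :
    (∀ s t θ : ℝ, 0 < θ → θ < 1 →
      lineObj φ f f' i x u (θ * s + (1 - θ) * t) ≤
        θ * lineObj φ f f' i x u s + (1 - θ) * lineObj φ f f' i x u t -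
          (dualN N (f' i x)) ^ 2 / M / 2 * (θ * (1 - θ) * (s - t) ^ 2)) ∧
    ∀ t : ℝ, (∀ s : ℝ, lineObj φ f f' i x u t ≤ lineObj φ f f' i x u s) →
      |t| ≤ M * |f i x| / (dualN N (f' i x)) ^ 2 :=
  statement8_general φ C f f' hφ hfin M hM N hN hsm x u hu i hf'0
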